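/- arXiv:1306.2024 — 2 statements merged into one kernel-verified Lean document; each statement's English description precedes it below -/
import Mathlib

section
/- Let f ∈ L¹(ℝⁿ) and ψ ∈ 𝓢(ℝ). Then for every (u,b,a) ∈ 𝕊^{n-1}×ℝ×(0,∞), R_ψ f(u,b,a) = (1/(2π)) ∫_ℝ f̂(ω u) · conj(ψ̂(a ω)) · e^{i b ω} dω. -/
open MeasureTheory Metric Filter Set
open scoped Real ComplexConjugate Manifold

noncomputable section

/-- Euclidean space ℝⁿ. -/
abbrev En (n : ℕ) := EuclideanSpace ℝ (Fin n)

/-- The unit sphere 𝕊^{n-1} of ℝⁿ, as a subtype. -/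
abbrev Sph (n : ℕ) := Metric.sphere (0 : En n) 1

/-- The surface measure on the sphere 𝕊^{n-1}. -/
def sphMeasure (n : ℕ) : Measure (Sph n) := (volume : Measure (En n)).toSphere

/-- 1D Fourier transform ĝ(ω) = ∫ g(x) e^{-i x ω} dx. -/
def FT1 (g : ℝ → ℂ) (ω : ℝ) : ℂ := ∫ x : ℝ, g x * Complex.exp (-(Complex.I * (x * ω : ℝ)))

/-- n-dimensional Fourier transform ĝ(w) = ∫ g(x) e^{-i x·w} dx. -/
def FTn {n : ℕ} (g : En n → ℂ) (w : En n) : ℂ :=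
  ∫ x : En n, g x * Complex.exp (-(Complex.I * (inner ℝ x w : ℝ)))

/-- The ridgelet ψ_{u,b,a}(x) = a⁻¹ ψ((x·u − b)/a). -/
def ridgelet {n : ℕ} (ψ : ℝ → ℂ) (u : Sph n) (b a : ℝ) (x : En n) : ℂ :=
  (a : ℂ)⁻¹ * ψ (((inner ℝ x (u : En n) : ℝ) - b) / a)

/-- The ridgelet transform R_ψ f(u,b,a) = ∫ f(x) conj(ψ_{u,b,a}(x)) dx. -/
def RT {n : ℕ} (ψ : ℝ → ℂ) (f : En n → ℂ) (u : Sph n) (b a : ℝ) : ℂ :=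
  ∫ x : En n, f x * conj (ridgelet ψ u b a x)

/-- K_{ψ,η} = (2π)^{n-1} ∫ conj(ψ̂(ω)) η̂(ω) |ω|^{-n} dω. -/
def Kconst (n : ℕ) (ψ η : ℝ → ℂ) : ℂ :=
  (((2 * π) ^ (n - 1) : ℝ) : ℂ) *
    ∫ ω : ℝ, conj (FT1 ψ ω) * FT1 η ω * ((|ω| ^ n : ℝ) : ℂ)⁻¹

/-- All moments vanish (Lizorkin condition on ℝ). -/
def Lizorkin1 (ψ : ℝ → ℂ) : Prop := ∀ m : ℕ, ∫ x : ℝ, (x : ℂ) ^ m * ψ x = 0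

/-- All moments vanish (Lizorkin condition on ℝⁿ). -/
def LizorkinN {n : ℕ} (φ : En n → ℂ) : Prop :=
  ∀ m : Fin n → ℕ, ∫ x : En n, (∏ i, (x i : ℂ) ^ m i) * φ x = 0

/-- The Radon transform Rf(u,p) = ∫_{u^⊥} f(pu + y) dy. -/
def Radon {n : ℕ} (f : En n → ℂ) (u : Sph n) (p : ℝ) : ℂ :=
  ∫ y : ((ℝ ∙ (u : En n))ᗮ : Submodule ℝ (En n)), f (p • (u : En n) + y)

/-- The 1D wavelet transform W_ψ g(b,a) = ∫ g(p) a⁻¹ conj(ψ((p−b)/a)) dp. -/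
def WT (ψ : ℝ → ℂ) (g : ℝ → ℂ) (b a : ℝ) : ℂ :=
  ∫ p : ℝ, g p * ((a : ℂ)⁻¹ * conj (ψ ((p - b) / a)))

/-- Rapid decay of a function Φ on 𝕊^{n-1}×ℝ×(0,∞) (arguments ordered (u,b,a)). -/
structure RapidDecay {n : ℕ} (Φ : Sph n → ℝ → ℝ → ℂ) : Prop where
  cont : ContinuousOn (fun q : Sph n × ℝ × ℝ => Φ q.1 q.2.1 q.2.2)
    (univ ×ˢ univ ×ˢ Ioi (0 : ℝ))
  decay : ∀ s r : ℕ, ∃ C : ℝ, ∀ (u : Sph n) (b : ℝ) (a : ℝ), 0 < a →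
    (a ^ s + (a ^ s)⁻¹) * (1 + b ^ 2) ^ ((r : ℝ) / 2) * ‖Φ u b a‖ ≤ C

/-- The ridgelet synthesis operator
R^t_ψ Φ(x) = ∫_{𝕊^{n-1}} ∫₀^∞ ∫_ℝ Φ(u,b,a) ψ_{u,b,a}(x) a^{−n} db da du. -/
def RTsynth {n : ℕ} (ψ : ℝ → ℂ) (Φ : Sph n → ℝ → ℝ → ℂ) (x : En n) : ℂ :=
  ∫ u : Sph n, (∫ a in Ioi (0:ℝ), (∫ b : ℝ, Φ u b a * ridgelet ψ u b a x * ((a ^ n : ℝ) : ℂ)⁻¹))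
    ∂(sphMeasure n)

/-- The seminorm ρ_ν(φ) = sup_{x, m ≤ ν} (1+|x|)^ν ‖∂^m φ(x)‖. -/
def rho {E : Type*} [NormedAddCommGroup E] [NormedSpace ℝ E] (ν : ℕ) (φ : E → ℂ) : ℝ :=
  ⨆ q : E × Fin (ν + 1), (1 + ‖q.1‖) ^ ν * ‖iteratedFDeriv ℝ q.2.1 φ q.1‖

open scoped FourierTransform RealInnerProductSpace

/-! By Fourier inversion on `ℝ`, `a⁻¹ conj ψ((t - b)/a)` is `(2π)⁻¹` times the Fourier transform of
`ω ↦ conj (ψ̂ (a ω)) e^{i b ω}` at `t = x·u`. Inserting this into `R_ψ f` and exchanging the two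
integrals (Fubini applies since `f` and `ψ̂` are integrable and the phases have modulus one), the
integral over `x` becomes `f̂ (ω u)`. -/

lemma FT1_eq_fourier (g : ℝ → ℂ) (ω : ℝ) : FT1 g ω = 𝓕 g (ω / (2 * π)) := by
  rw [Real.fourier_real_eq_integral_exp_smul, FT1]
  congr 1 with x
  rw [smul_eq_mul, mul_comm]
  congr 2
  push_cast
  field_simp

lemma integrable_FT1_comp_mul_left {g : ℝ → ℂ} (hFg : Integrable (𝓕 g)) {a : ℝ} (ha : a ≠ 0) :
    Integrable (fun ω => FT1 g (a * ω)) := by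
  simp only [FT1_eq_fourier, mul_div_right_comm]
  exact hFg.comp_mul_left' (div_ne_zero ha (by positivity))

lemma integral_FT1_mul_exp {g : ℝ → ℂ} (hg : Continuous g) (hgi : Integrable g)
    (hFg : Integrable (𝓕 g)) (t : ℝ) :
    ∫ ω, FT1 g ω * Complex.exp (Complex.I * (t * ω : ℝ)) = 2 * π * g t := by
  set G : ℝ → ℂ := fun ξ => Complex.exp (↑(2 * π * ⟪ξ, t⟫) * Complex.I) • 𝓕 g ξ
  have hinv : ∫ ξ, G ξ = g t := by
    rw [← Real.fourierInv_eq', hg.fourierInv_fourier_eq hgi hFg]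
  calc ∫ ω, FT1 g ω * Complex.exp (Complex.I * (t * ω : ℝ))
      = ∫ ω, G ((2 * π)⁻¹ * ω) := by
        congr 1 with ω
        simp only [G, FT1_eq_fourier, smul_eq_mul, RCLike.inner_apply, conj_trivial]
        rw [mul_comm, div_eq_inv_mul]
        congr 2
        push_cast
        field_simp
    _ = 2 * π * g t := by
        rw [Measure.integral_comp_inv_mul_left, hinv, abs_of_pos (by positivity), Complex.real_smul]
        push_cast
        rfl

lemma MeasureTheory.Integrable.conj_mul_exp_I_mul {h : ℝ → ℂ} (hh : Integrable h) (b : ℝ) :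
    Integrable (fun ω => conj (h ω) * Complex.exp (Complex.I * (b * ω : ℝ))) :=
  hh.norm.mono' (hh.1.star.mul (Continuous.aestronglyMeasurable (by fun_prop)))
    (.of_forall fun ω => by rw [norm_mul, RCLike.norm_conj, Complex.norm_exp_I_mul_ofReal, mul_one])

lemma FT1_conj_FT1_comp_mul_mul_exp {g : ℝ → ℂ} (hg : Continuous g) (hgi : Integrable g)
    (hFg : Integrable (𝓕 g)) {a : ℝ} (ha : 0 < a) (b t : ℝ) :
    FT1 (fun ω => conj (FT1 g (a * ω)) * Complex.exp (Complex.I * (b * ω : ℝ))) t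
      = (2 * π / a : ℝ) * conj (g ((t - b) / a)) := by
  set H : ℝ → ℂ := fun η => FT1 g η * Complex.exp (Complex.I * ((t - b) / a * η : ℝ))
  calc FT1 (fun ω => conj (FT1 g (a * ω)) * Complex.exp (Complex.I * (b * ω : ℝ))) t
      = ∫ ω, conj (H (a * ω)) := by
        rw [FT1]
        congr 1 with ω
        simp only [H, map_mul, ← Complex.exp_conj, mul_assoc, ← Complex.exp_add]
        congr 2
        rw [Complex.conj_I, Complex.conj_ofReal, div_mul_comm, mul_div_cancel_left₀ _ ha.ne']
        push_cast
        ring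
    _ = (2 * π / a : ℝ) * conj (g ((t - b) / a)) := by
        rw [integral_conj, Measure.integral_comp_mul_left, integral_FT1_mul_exp hg hgi hFg,
          abs_of_pos (inv_pos.2 ha), Complex.real_smul]
        simp only [map_mul, map_ofNat, Complex.conj_ofReal]
        push_cast
        ring

lemma conj_ridgelet_eq_FT1 {g : ℝ → ℂ} (hg : Continuous g) (hgi : Integrable g)
    (hFg : Integrable (𝓕 g)) {n : ℕ} (u : Sph n) (b : ℝ) {a : ℝ} (ha : 0 < a) (x : En n) :
    conj (ridgelet g u b a x) = ((2 * π : ℝ) : ℂ)⁻¹ *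
      FT1 (fun ω => conj (FT1 g (a * ω)) * Complex.exp (Complex.I * (b * ω : ℝ))) ⟪x, u⟫ := by
  rw [FT1_conj_FT1_comp_mul_mul_exp hg hgi hFg ha, ridgelet, map_mul, map_inv₀,
    Complex.conj_ofReal]
  have : (π : ℂ) ≠ 0 := by exact_mod_cast Real.pi_ne_zero
  push_cast
  field_simp

lemma integral_mul_FT1_inner {n : ℕ} {f : En n → ℂ} {K : ℝ → ℂ} (hf : Integrable f)
    (hK : Integrable K) (u : En n) :
    ∫ x, f x * FT1 K ⟪x, u⟫ = ∫ ω, FTn f (ω • u) * K ω := by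
  set F : En n × ℝ → ℂ := fun p => f p.1 * K p.2 * Complex.exp (-(Complex.I * ⟪p.1, p.2 • u⟫))
  have hF : Integrable F (volume.prod volume) := by
    refine (hf.mul_prod hK).mul_bdd (c := 1) (Continuous.aestronglyMeasurable (by fun_prop))
      (.of_forall fun p => ?_)
    rw [← mul_neg, ← Complex.ofReal_neg, Complex.norm_exp_I_mul_ofReal]
  calc ∫ x, f x * FT1 K ⟪x, u⟫
      = ∫ x, ∫ ω, F (x, ω) := by
        congr 1 with x
        rw [FT1, ← integral_const_mul]
        congr 1 with ω
        simp only [F, real_inner_smul_right, mul_comm ω]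
        ring
    _ = ∫ ω, ∫ x, F (x, ω) := integral_integral_swap hF
    _ = ∫ ω, FTn f (ω • u) * K ω := by
        congr 1 with ω
        rw [FTn, ← integral_mul_const]
        congr 1 with x
        ring

theorem ridgelet_fourier_formula_general
    (n : ℕ) (f : En n → ℂ) (hf : Integrable f) (ψ : SchwartzMap ℝ ℂ) :
    ∀ (u : Sph n) (b a : ℝ), 0 < a →
      RT ⇑ψ f u b a = ((2 * π : ℝ) : ℂ)⁻¹ *
        ∫ ω : ℝ, FTn f (ω • (u : En n)) * conj (FT1 ⇑ψ (a * ω))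
          * Complex.exp (Complex.I * (b * ω : ℝ)) := by
  intro u b a ha
  have hFψ : Integrable (𝓕 ⇑ψ) := SchwartzMap.fourier_coe ψ ▸ (𝓕 ψ).integrable
  have hK := (integrable_FT1_comp_mul_left hFψ ha.ne').conj_mul_exp_I_mul b
  calc RT ⇑ψ f u b a
      = ((2 * π : ℝ) : ℂ)⁻¹ * ∫ x, f x *
          FT1 (fun ω => conj (FT1 ψ (a * ω)) * Complex.exp (Complex.I * (b * ω : ℝ))) ⟪x, u⟫ := by
        simp only [RT, conj_ridgelet_eq_FT1 ψ.continuous ψ.integrable hFψ u b ha,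
          ← integral_const_mul, mul_left_comm]
    _ = _ := by
        simp only [integral_mul_FT1_inner hf hK, mul_assoc]

/-- the Fourier formula for the ridgelet transform,
R_ψf(u,b,a) = (1/(2π)) ∫_ℝ f̂(ωu) conj(ψ̂(aω)) e^{ibω} dω. -/
theorem ridgelet_fourier_formula
    (n : ℕ) (hn : 2 ≤ n) (f : En n → ℂ) (hf : Integrable f) (ψ : SchwartzMap ℝ ℂ) :
    ∀ (u : Sph n) (b a : ℝ), 0 < a →
      RT ⇑ψ f u b a = ((2 * π : ℝ) : ℂ)⁻¹ *
        ∫ ω : ℝ, FTn f (ω • (u : En n)) * conj (FT1 ⇑ψ (a * ω))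
          * Complex.exp (Complex.I * (b * ω : ℝ)) :=
  ridgelet_fourier_formula_general n f hf ψ
end
end

section
/- For every integer s ≥ 1 there exists C > 0 such that for all φ ∈ 𝓢(ℝⁿ), all ψ ∈ 𝓢₀(ℝ), and all (u,b,a) ∈ 𝕊^{n-1}×ℝ×(0,∞): a^{−s} |R_ψ φ(u,b,a)| ≤ C ρ_{s+n+1}(φ) ρ_{s+2}(ψ). -/
open MeasureTheory Metric Filter Set
open scoped Real ComplexConjugate Manifold

noncomputable section

/-!
In coordinates `x = p • u + η` with `η ⊥ u`, the ridgelet transform becomes an integral over `η`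
of one-dimensional wavelet transforms `W_ψ g_η (b, a)` of the restrictions `g_η p = φ (p • u + η)`.
Because all moments of `ψ` vanish, `W_ψ g (b, a) = ∫ (g (b + a t) - T(t)) conj (ψ t) dt` for the
Taylor polynomial `T` of degree `s - 1` of `t ↦ g (b + a t)` at `0`, whose remainder is at most
`a ^ s * sup |g⁽ˢ⁾| * |t| ^ s`. The decay of `φ` bounds `sup |g_η⁽ˢ⁾|` by
`ρ_{s+n+1}(φ) (1 + |η|)^{-n}`, integrable over `η ∈ ℝ^{n-1}`, and the decay of `ψ` bounds
`∫ |t| ^ s |ψ t| dt` by `ρ_{s+2}(ψ) ∫ (1 + |t|)^{-2} dt`.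
-/

section Rho

variable {E : Type*} [NormedAddCommGroup E] [NormedSpace ℝ E]

lemma rho_nonneg (ν : ℕ) (φ : E → ℂ) : 0 ≤ rho ν φ :=
  Real.iSup_nonneg fun _ => by positivity

lemma le_rho (φ : SchwartzMap E ℂ) {k ν : ℕ} (hk : k ≤ ν) (x : E) :
    (1 + ‖x‖) ^ ν * ‖iteratedFDeriv ℝ k φ x‖ ≤ rho ν φ := by
  refine le_ciSup
    (f := fun q : E × Fin (ν + 1) => (1 + ‖q.1‖) ^ ν * ‖iteratedFDeriv ℝ q.2.1 φ q.1‖)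
    ⟨2 ^ ν * (Finset.Iic (ν, ν)).sup (fun m => SchwartzMap.seminorm ℝ m.1 m.2) φ, ?_⟩
    (x, ⟨k, Nat.lt_succ_of_le hk⟩)
  rintro _ ⟨⟨y, i⟩, rfl⟩
  exact SchwartzMap.one_add_le_sup_seminorm_apply (m := (ν, ν)) le_rfl
    (Nat.lt_succ_iff.mp i.isLt) φ y

lemma norm_iteratedFDeriv_le_rho_mul (φ : SchwartzMap E ℂ) {k ν : ℕ} (hk : k ≤ ν) (x : E) :
    ‖iteratedFDeriv ℝ k φ x‖ ≤ rho ν φ * (1 + ‖x‖) ^ (-(ν : ℝ)) := by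
  rw [Real.rpow_neg (by positivity), Real.rpow_natCast, ← div_eq_mul_inv,
    le_div_iff₀ (by positivity), mul_comm]
  exact le_rho φ hk x

end Rho

lemma norm_iteratedDeriv_comp_smul_add_le {E F : Type*} [NormedAddCommGroup E] [NormedSpace ℝ E]
    [NormedAddCommGroup F] [NormedSpace ℝ F] {k : ℕ} {f : E → F} (hf : ContDiff ℝ k f)
    (v c : E) (t : ℝ) :
    ‖iteratedDeriv k (fun r : ℝ => f (r • v + c)) t‖
      ≤ ‖iteratedFDeriv ℝ k f (t • v + c)‖ * ‖v‖ ^ k := by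
  let L : ℝ →L[ℝ] E := ContinuousLinearMap.toSpanSingleton ℝ v
  have hline : iteratedDeriv k (fun r : ℝ => f (r • v + c)) t
      = iteratedFDeriv ℝ k f (t • v + c) (fun _ => v) := by
    have hcomp := L.iteratedFDeriv_comp_right (f := fun x => f (x + c))
      (hf.comp (contDiff_id.add contDiff_const)) t le_rfl
    rw [Function.comp_def, iteratedFDeriv_comp_add_right'] at hcomp
    change iteratedFDeriv ℝ k (fun x => f (L x + c)) t (fun _ => 1) = _
    rw [hcomp]
    simp [L]
  rw [hline]
  simpa using (iteratedFDeriv ℝ k f (t • v + c)).le_opNorm (fun _ => v)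

section Taylor

variable {E : Type*} [NormedAddCommGroup E] [NormedSpace ℝ E]

lemma hasDerivAt_sum_pow_div_factorial_smul (c : ℕ → E) (s : ℕ) (r : ℝ) :
    HasDerivAt (fun r : ℝ => ∑ k ∈ Finset.range (s + 1), (r ^ k / k.factorial : ℝ) • c k)
      (∑ k ∈ Finset.range s, (r ^ k / k.factorial : ℝ) • c (k + 1)) r := by
  have hterm : ∀ k : ℕ, HasDerivAt (fun r : ℝ => (r ^ k / k.factorial : ℝ) • c k)
      ((k * r ^ (k - 1) / k.factorial : ℝ) • c k) r := fun k =>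
    ((hasDerivAt_pow k r).div_const _).smul_const _
  convert HasDerivAt.fun_sum fun k _ => hterm k using 1
  rw [Finset.sum_range_succ']
  simp only [Nat.cast_zero, zero_mul, zero_div, zero_smul, add_zero, Nat.cast_succ,
    add_tsub_cancel_right, Nat.factorial_succ, Nat.cast_mul]
  refine Finset.sum_congr rfl fun k _ => ?_
  rw [mul_div_mul_left _ _ (by positivity)]

lemma norm_sub_sum_iteratedDeriv_le {s : ℕ} {f : ℝ → E} (hf : ContDiff ℝ s f) {K : ℝ}
    (hK : ∀ x, ‖iteratedDeriv s f x‖ ≤ K) (t : ℝ) :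
    ‖f t - ∑ k ∈ Finset.range s, (t ^ k / k.factorial : ℝ) • iteratedDeriv k f 0‖
      ≤ K * |t| ^ s := by
  induction s generalizing f t with
  | zero => simpa using hK t
  | succ s ih =>
    have hf' : ContDiff ℝ s (deriv f) := (contDiff_succ_iff_deriv.mp hf).2.2
    have ih' := ih hf' fun x => by simpa [← iteratedDeriv_succ'] using hK x
    simp only [← iteratedDeriv_succ'] at ih'
    set R : ℝ → E := fun r =>
      f r - ∑ k ∈ Finset.range (s + 1), (r ^ k / k.factorial : ℝ) • iteratedDeriv k f 0
    have hR : ∀ r, HasDerivAt R (deriv f r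
        - ∑ k ∈ Finset.range s, (r ^ k / k.factorial : ℝ) • iteratedDeriv (k + 1) f 0) r := fun r =>
      ((hf.differentiable (by simp)) r).hasDerivAt.sub
        (hasDerivAt_sum_pow_div_factorial_smul (fun k => iteratedDeriv k f 0) s r)
    have hR' : ∀ ξ ∈ Set.uIcc 0 t, ‖deriv f ξ
        - ∑ k ∈ Finset.range s, (ξ ^ k / k.factorial : ℝ) • iteratedDeriv (k + 1) f 0‖
          ≤ K * |t| ^ s :=
      fun ξ hξ => (ih' ξ).trans <| mul_le_mul_of_nonneg_left
        (pow_le_pow_left₀ (abs_nonneg ξ) (by simpa using Set.abs_sub_left_of_mem_uIcc hξ) s)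
        ((norm_nonneg _).trans (hK 0))
    have := Convex.norm_image_sub_le_of_norm_hasDerivWithin_le
      (fun ξ _ => (hR ξ).hasDerivWithinAt) hR' (convex_uIcc 0 t) Set.left_mem_uIcc
      Set.right_mem_uIcc
    have hR0 : R 0 = 0 := by simp [R, Finset.sum_range_succ']
    simpa [hR0, pow_succ, mul_assoc] using this

end Taylor

lemma Lizorkin1.integral_pow_mul_conj_eq_zero {ψ : ℝ → ℂ} (hψ : Lizorkin1 ψ) (k : ℕ) :
    ∫ t : ℝ, (t : ℂ) ^ k * conj (ψ t) = 0 := by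
  have hconj : ∀ t : ℝ, (t : ℂ) ^ k * conj (ψ t) = conj ((t : ℂ) ^ k * ψ t) := by simp
  simp only [hconj, integral_conj, hψ k, map_zero]

lemma Lizorkin1.norm_integral_mul_conj_le {ψ : SchwartzMap ℝ ℂ} (hψ : Lizorkin1 ψ) {s : ℕ}
    {g : ℝ → ℂ} (hg : ContDiff ℝ s g) {K : ℝ} (hK : ∀ t, ‖iteratedDeriv s g t‖ ≤ K) :
    ‖∫ t, g t * conj (ψ t)‖ ≤ K * ∫ t, ‖t‖ ^ s * ‖ψ t‖ := by
  set P : ℝ → ℂ := fun t => ∑ k ∈ Finset.range s, (t ^ k / k.factorial : ℝ) • iteratedDeriv k g 0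
  have hmoment_int : ∀ k : ℕ, Integrable (fun t : ℝ => (t : ℂ) ^ k * conj (ψ t)) := fun k =>
    (ψ.integrable_pow_mul volume k).mono' (by fun_prop) (ae_of_all _ fun t => by simp)
  have hP_expand : ∀ t : ℝ, P t * conj (ψ t)
      = ∑ k ∈ Finset.range s, iteratedDeriv k g 0 / k.factorial * ((t : ℂ) ^ k * conj (ψ t)) := by
    intro t
    simp only [P, Finset.sum_mul, Complex.real_smul]
    refine Finset.sum_congr rfl fun k _ => ?_
    push_cast
    ring
  have hP_int : Integrable (fun t => P t * conj (ψ t)) := by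
    simp only [hP_expand]
    exact integrable_finsetSum _ fun k _ => (hmoment_int k).const_mul _
  have hP_zero : ∫ t, P t * conj (ψ t) = 0 := by
    simp only [hP_expand]
    rw [integral_finsetSum _ fun k _ => (hmoment_int k).const_mul _]
    simp [integral_const_mul, hψ.integral_pow_mul_conj_eq_zero]
  have hrem : ∀ t : ℝ, ‖(g t - P t) * conj (ψ t)‖ ≤ K * (‖t‖ ^ s * ‖ψ t‖) := by
    intro t
    rw [norm_mul, RCLike.norm_conj, Real.norm_eq_abs, ← mul_assoc]
    gcongr
    exact norm_sub_sum_iteratedDeriv_le hg hK t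
  have hrem_int : Integrable (fun t => (g t - P t) * conj (ψ t)) :=
    ((ψ.integrable_pow_mul volume s).const_mul K).mono'
      ((hg.continuous.sub (by fun_prop)).mul (by fun_prop)).aestronglyMeasurable
      (ae_of_all _ hrem)
  have hsplit : ∫ t, g t * conj (ψ t) = ∫ t, (g t - P t) * conj (ψ t) := by
    rw [← add_zero (∫ t, (g t - P t) * conj (ψ t)), ← hP_zero, ← integral_add hrem_int hP_int]
    simp only [sub_mul, sub_add_cancel]
  calc ‖∫ t, g t * conj (ψ t)‖ ≤ ∫ t, ‖(g t - P t) * conj (ψ t)‖ :=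
        hsplit ▸ norm_integral_le_integral_norm _
    _ ≤ ∫ t, K * (‖t‖ ^ s * ‖ψ t‖) :=
        integral_mono_of_nonneg (ae_of_all _ fun _ => norm_nonneg _)
          ((ψ.integrable_pow_mul volume s).const_mul K) (ae_of_all _ hrem)
    _ = K * ∫ t, ‖t‖ ^ s * ‖ψ t‖ := integral_const_mul _ _

lemma WT_eq_integral_comp_mul_conj (ψ g : ℝ → ℂ) (b : ℝ) {a : ℝ} (ha : 0 < a) :
    WT ψ g b a = ∫ t, g (b + a * t) * conj (ψ t) := by
  set G : ℝ → ℂ := fun p => g p * ((a : ℂ)⁻¹ * conj (ψ ((p - b) / a)))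
  have hG : ∀ t, G (b + a * t) = (a : ℂ)⁻¹ * (g (b + a * t) * conj (ψ t)) := fun t => by
    simp only [G, add_sub_cancel_left, mul_div_cancel_left₀ t ha.ne']
    ring
  have hsubst : ∫ t, G (b + a * t) = a⁻¹ • ∫ p, G p := by
    rw [Measure.integral_comp_mul_left (fun q => G (b + q)), integral_add_left_eq_self,
      abs_of_pos (inv_pos.mpr ha)]
  rw [WT, ← smul_inv_smul₀ ha.ne' (∫ p, G p), ← hsubst]
  simp only [hG, integral_const_mul, Complex.real_smul]
  rw [← mul_assoc, mul_inv_cancel₀ (Complex.ofReal_ne_zero.mpr ha.ne'), one_mul]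

lemma Lizorkin1.norm_WT_le {ψ : SchwartzMap ℝ ℂ} (hψ : Lizorkin1 ψ) {s : ℕ} {g : ℝ → ℂ}
    (hg : ContDiff ℝ s g) {K : ℝ} (hK : ∀ p, ‖iteratedDeriv s g p‖ ≤ K) (b : ℝ) {a : ℝ}
    (ha : 0 < a) :
    ‖WT ψ g b a‖ ≤ a ^ s * K * ∫ t, ‖t‖ ^ s * ‖ψ t‖ := by
  have hscaled : ∀ t, iteratedDeriv s (fun x => g (b + a * x)) t
      = a ^ s • iteratedDeriv s g (b + a * t) := fun t => by
    rw [iteratedDeriv_comp_const_smul (f := fun q => g (b + q))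
      (hg.comp (contDiff_const.add contDiff_id)), iteratedDeriv_comp_const_add]
  rw [WT_eq_integral_comp_mul_conj _ _ _ ha]
  refine hψ.norm_integral_mul_conj_le (g := fun x => g (b + a * x))
    (hg.comp (contDiff_const.add (contDiff_const.mul contDiff_id))) fun t => ?_
  rw [hscaled, norm_smul, norm_pow, Real.norm_of_nonneg ha.le]
  exact mul_le_mul_of_nonneg_left (hK _) (by positivity)

lemma integral_norm_pow_mul_norm_le_rho {E : Type*} [NormedAddCommGroup E] [NormedSpace ℝ E]
    [FiniteDimensional ℝ E] [MeasurableSpace E] [BorelSpace E] {μ : Measure E}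
    [μ.IsAddHaarMeasure] (φ : SchwartzMap E ℂ) (s : ℕ) {r : ℕ} (hr : Module.finrank ℝ E < r) :
    ∫ x, ‖x‖ ^ s * ‖φ x‖ ∂μ ≤ rho (s + r) φ * ∫ x, (1 + ‖x‖) ^ (-(r : ℝ)) ∂μ := by
  rw [← integral_const_mul]
  refine integral_mono_of_nonneg (ae_of_all _ fun _ => by positivity)
    ((integrable_one_add_norm (by exact_mod_cast hr)).const_mul _) (ae_of_all _ fun x => ?_)
  have hdecay := norm_iteratedFDeriv_le_rho_mul φ (Nat.zero_le (s + r)) x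
  rw [norm_iteratedFDeriv_zero] at hdecay
  calc ‖x‖ ^ s * ‖φ x‖
      ≤ (1 + ‖x‖) ^ (s : ℝ) * (rho (s + r) φ * (1 + ‖x‖) ^ (-((s + r : ℕ) : ℝ))) := by
        rw [Real.rpow_natCast]
        gcongr
        linarith
    _ = rho (s + r) φ * (1 + ‖x‖) ^ (-(r : ℝ)) := by
        rw [mul_left_comm, ← Real.rpow_add (by positivity)]
        push_cast
        ring_nf

lemma inner_smul_add_of_mem_orthogonal_singleton {E : Type*} [NormedAddCommGroup E]
    [InnerProductSpace ℝ E] {u y : E} (hu : ‖u‖ = 1) (hy : y ∈ (ℝ ∙ u)ᗮ) (p : ℝ) :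
    inner ℝ (p • u + y) u = p := by
  rw [inner_add_left, real_inner_smul_left, real_inner_self_eq_norm_sq, hu,
    Submodule.mem_orthogonal_singleton_iff_inner_left.mp hy]
  ring

section OrthogonalCoords

variable {E : Type*} [NormedAddCommGroup E] [InnerProductSpace ℝ E] {ι : Type*} [Fintype ι]
  {u : E} (hu : ‖u‖ = 1) (e : OrthonormalBasis ι ℝ (ℝ ∙ u)ᗮ)

def orthogonalCoords : WithLp 2 (ℝ × EuclideanSpace ℝ ι) ≃ₗᵢ[ℝ] E :=
  ((LinearIsometryEquiv.toSpanUnitSingleton u hu).withLpProdCongr 2 e.repr.symm).trans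
    (ℝ ∙ u).orthogonalDecomposition.symm

lemma orthogonalCoords_apply (p : ℝ) (η : EuclideanSpace ℝ ι) :
    orthogonalCoords hu e (WithLp.toLp 2 (p, η)) = p • u + e.repr.symm η := by
  simp [orthogonalCoords]

lemma norm_le_norm_orthogonalCoords (p : ℝ) (η : EuclideanSpace ℝ ι) :
    ‖η‖ ≤ ‖orthogonalCoords hu e (WithLp.toLp 2 (p, η))‖ := by
  rw [LinearIsometryEquiv.norm_map]
  exact WithLp.norm_snd_le (x := WithLp.toLp 2 (p, η))

variable [FiniteDimensional ℝ E] [MeasurableSpace E] [BorelSpace E] in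
lemma measurePreserving_orthogonalCoords :
    MeasurePreserving ((MeasurableEquiv.toLp 2 (ℝ × EuclideanSpace ℝ ι)).trans
      (orthogonalCoords hu e).toMeasurableEquiv) volume volume :=
  (orthogonalCoords hu e).measurePreserving.comp (WithLp.volume_preserving_toLp _ _)

end OrthogonalCoords

lemma RT_eq_integral_WT {n : ℕ} {ι : Type*} [Fintype ι] (ψ : SchwartzMap ℝ ℂ)
    (φ : SchwartzMap (En n) ℂ) (u : Sph n) (e : OrthonormalBasis ι ℝ (ℝ ∙ (u : En n))ᗮ)
    (b a : ℝ) :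
    RT ψ φ u b a = ∫ η, WT ψ (fun p => φ (p • (u : En n) + e.repr.symm η)) b a := by
  have hu : ‖(u : En n)‖ = 1 := norm_eq_of_mem_sphere u
  set T := (MeasurableEquiv.toLp 2 (ℝ × EuclideanSpace ℝ ι)).trans
    (orthogonalCoords hu e).toMeasurableEquiv
  have hT : MeasurePreserving T volume volume := measurePreserving_orthogonalCoords hu e
  set F : En n → ℂ := fun x => φ x * conj (ridgelet ψ u b a x)
  have hF : Integrable F := by
    refine φ.integrable.mul_bdd (c := ‖(a : ℂ)⁻¹‖ * SchwartzMap.seminorm ℝ 0 0 ψ)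
      (by unfold ridgelet; fun_prop) (ae_of_all _ fun x => ?_)
    rw [RCLike.norm_conj, ridgelet, norm_mul]
    gcongr
    exact SchwartzMap.norm_le_seminorm ℝ ψ _
  have hFT : Integrable (fun z => F (T z)) :=
    (hT.integrable_comp_emb T.measurableEmbedding).mpr hF
  rw [RT, ← hT.integral_comp' F, Measure.volume_eq_prod, integral_prod_symm _ hFT]
  refine integral_congr_ae (ae_of_all _ fun η => integral_congr_ae (ae_of_all _ fun p => ?_))
  have hTp : T (p, η) = orthogonalCoords hu e (WithLp.toLp 2 (p, η)) := rfl
  simp only [F, ridgelet, hTp, orthogonalCoords_apply,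
    inner_smul_add_of_mem_orthogonal_singleton hu (e.repr.symm η).2, map_mul, map_inv₀,
    Complex.conj_ofReal]

lemma norm_iteratedDeriv_line_le_rho_mul {E : Type*} [NormedAddCommGroup E]
    [InnerProductSpace ℝ E] {ι : Type*} [Fintype ι] {u : E} (hu : ‖u‖ = 1)
    (e : OrthonormalBasis ι ℝ (ℝ ∙ u)ᗮ) (φ : SchwartzMap E ℂ) (η : EuclideanSpace ℝ ι)
    {k ν : ℕ} (hk : k ≤ ν) {r : ℝ} (hr : r ≤ ν) (p : ℝ) :
    ‖iteratedDeriv k (fun p => φ (p • u + e.repr.symm η)) p‖ ≤ rho ν φ * (1 + ‖η‖) ^ (-r) := by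
  have hη := norm_le_norm_orthogonalCoords hu e p η
  rw [orthogonalCoords_apply] at hη
  calc ‖iteratedDeriv k (fun p => φ (p • u + e.repr.symm η)) p‖
      ≤ ‖iteratedFDeriv ℝ k φ (p • u + e.repr.symm η)‖ := by
        simpa [hu] using norm_iteratedDeriv_comp_smul_add_le (φ.smooth k) u (e.repr.symm η : E) p
    _ ≤ rho ν φ * (1 + ‖p • u + e.repr.symm η‖) ^ (-(ν : ℝ)) :=
        norm_iteratedFDeriv_le_rho_mul φ hk _
    _ ≤ rho ν φ * (1 + ‖η‖) ^ (-r) := by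
        have := rho_nonneg ν φ
        gcongr
        calc (1 + ‖p • u + e.repr.symm η‖) ^ (-(ν : ℝ))
            ≤ (1 + ‖η‖) ^ (-(ν : ℝ)) :=
              Real.rpow_le_rpow_of_nonpos (by positivity) (by linarith) (by simp)
          _ ≤ (1 + ‖η‖) ^ (-r) := Real.rpow_le_rpow_of_exponent_le (by simp) (by linarith)

lemma norm_RT_le {m : ℕ} (s : ℕ) (φ : SchwartzMap (En (m + 1)) ℂ) {ψ : SchwartzMap ℝ ℂ}
    (hψ : Lizorkin1 ψ) (u : Sph (m + 1)) (b : ℝ) {a : ℝ} (ha : 0 < a) :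
    ‖RT ψ φ u b a‖ ≤ a ^ s
      * (rho (s + (m + 1) + 1) φ * ∫ η : EuclideanSpace ℝ (Fin m), (1 + ‖η‖) ^ (-(m + 1 : ℝ)))
      * (rho (s + 2) ψ * ∫ t : ℝ, (1 + ‖t‖) ^ (-2 : ℝ)) := by
  have : Fact (Module.finrank ℝ (En (m + 1)) = m + 1) := ⟨finrank_euclideanSpace_fin⟩
  have hu : ‖(u : En (m + 1))‖ = 1 := norm_eq_of_mem_sphere u
  let e := OrthonormalBasis.fromOrthogonalSpanSingleton (𝕜 := ℝ) m (ne_zero_of_mem_unit_sphere u)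
  set ρφ := rho (s + (m + 1) + 1) φ
  set Mψ := rho (s + 2) ψ * ∫ t : ℝ, (1 + ‖t‖) ^ (-2 : ℝ)
  have hline : ∀ η, ‖WT ψ (fun p => φ (p • (u : En (m + 1)) + e.repr.symm η)) b a‖
      ≤ (1 + ‖η‖) ^ (-(m + 1 : ℝ)) * (a ^ s * ρφ * Mψ) := fun η => by
    have := rho_nonneg (s + (m + 1) + 1) φ
    calc _ ≤ a ^ s * (ρφ * (1 + ‖η‖) ^ (-(m + 1 : ℝ))) * ∫ t : ℝ, ‖t‖ ^ s * ‖ψ t‖ :=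
          hψ.norm_WT_le ((φ.smooth s).comp (by fun_prop))
            (norm_iteratedDeriv_line_le_rho_mul hu e φ η (by omega) (by push_cast; linarith)) b ha
      _ ≤ a ^ s * (ρφ * (1 + ‖η‖) ^ (-(m + 1 : ℝ))) * Mψ := by
          gcongr
          simpa only [Nat.cast_ofNat] using
            integral_norm_pow_mul_norm_le_rho (μ := volume) ψ s (r := 2) (by simp)
      _ = _ := by ring
  rw [RT_eq_integral_WT ψ φ u e]
  refine (norm_integral_le_of_norm_le ((integrable_one_add_norm (by simp)).mul_const _)
    (ae_of_all _ hline)).trans_eq ?_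
  rw [integral_mul_const]
  ring

theorem ridgelet_small_scale_estimate_general
    (n : ℕ) (s : ℕ) :
    ∃ C : ℝ, 0 < C ∧
      ∀ (φ : SchwartzMap (En n) ℂ) (ψ : SchwartzMap ℝ ℂ), Lizorkin1 ⇑ψ →
      ∀ (u : Sph n) (b a : ℝ), 0 < a →
        (a ^ s)⁻¹ * ‖RT ⇑ψ ⇑φ u b a‖ ≤ C * rho (s + n + 1) ⇑φ * rho (s + 2) ⇑ψ := by
  obtain _ | m := n
  · refine ⟨1, one_pos, fun _ _ _ u => absurd (norm_eq_of_mem_sphere u) ?_⟩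
    simp [Subsingleton.elim (u : En 0) 0]
  set Iφ := ∫ η : EuclideanSpace ℝ (Fin m), (1 + ‖η‖) ^ (-(m + 1 : ℝ))
  set Iψ := ∫ t : ℝ, (1 + ‖t‖) ^ (-2 : ℝ)
  have hIφ : 0 ≤ Iφ := integral_nonneg fun _ => by positivity
  have hIψ : 0 ≤ Iψ := integral_nonneg fun _ => by positivity
  refine ⟨Iφ * Iψ + 1, by positivity, fun φ ψ hψ u b a ha => ?_⟩
  rw [inv_mul_le_iff₀ (by positivity)]
  calc ‖RT ψ φ u b a‖ ≤ a ^ s * (rho (s + (m + 1) + 1) φ * Iφ) * (rho (s + 2) ψ * Iψ) :=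
        norm_RT_le s φ hψ u b ha
    _ ≤ a ^ s * ((Iφ * Iψ + 1) * rho (s + (m + 1) + 1) φ * rho (s + 2) ψ) := by
        nlinarith [mul_nonneg (pow_nonneg ha.le s) (mul_nonneg (rho_nonneg (s + (m + 1) + 1) φ)
          (rho_nonneg (s + 2) ψ))]

/-- for s ≥ 1 there is C > 0 with
a^{−s} |R_ψφ(u,b,a)| ≤ C ρ_{s+n+1}(φ) ρ_{s+2}(ψ) for φ ∈ 𝓢(ℝⁿ) and ψ ∈ 𝓢₀(ℝ). -/
theorem ridgelet_small_scale_estimate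
    (n : ℕ) (hn : 2 ≤ n) (s : ℕ) (hs : 1 ≤ s) :
    ∃ C : ℝ, 0 < C ∧
      ∀ (φ : SchwartzMap (En n) ℂ) (ψ : SchwartzMap ℝ ℂ), Lizorkin1 ⇑ψ →
      ∀ (u : Sph n) (b a : ℝ), 0 < a →
        (a ^ s)⁻¹ * ‖RT ⇑ψ ⇑φ u b a‖ ≤ C * rho (s + n + 1) ⇑φ * rho (s + 2) ⇑ψ :=
  ridgelet_small_scale_estimate_general n s
end
end
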